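/- arXiv:0808.1201 — 2 statements merged into one kernel-verified Lean document; each statement's English description precedes it below -/
import Mathlib

section
/- On the 8-dimensional nilpotent Lie algebra with de¹ = de² = de³ = de⁴ = 0, de⁵ = −e¹∧e³ + e²∧e⁴, de⁶ = −e¹∧e⁴ − e²∧e³, de⁷ = −2(e¹∧e⁵ − e²∧e⁶), de⁸ = −2(e¹∧e⁶ + e²∧e⁵), the 2-form F = e¹∧e² + e³∧e⁴ + e⁵∧e⁶ + e⁷∧e⁸ satisfies dF∧F∧F = 0, i.e. d(F³) = 0 (the metric is balanced), while dF ≠ 0. -/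
/-- The generators `e¹, …, e⁸` (0-indexed) of the exterior algebra of the dual
of an 8-dimensional Lie algebra. -/
noncomputable def E : Fin 8 → ExteriorAlgebra ℝ (Fin 8 → ℝ) :=
  fun i => ExteriorAlgebra.ι ℝ (Pi.single i 1)

open ExteriorAlgebra in
lemma Esq (i : Fin 8) : E i * E i = 0 := ι_sq_zero _

lemma Esq' (i : Fin 8) (x : ExteriorAlgebra ℝ (Fin 8 → ℝ)) : E i * (E i * x) = 0 := by
  rw [← mul_assoc, Esq, zero_mul]

open ExteriorAlgebra in
lemma Eswap (i j : Fin 8) (_h : j < i) : E i * E j = -(E j * E i) :=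
  eq_neg_of_add_eq_zero_left (ι_add_mul_swap _ _)

lemma Eswap' (i j : Fin 8) (h : j < i) (x : ExteriorAlgebra ℝ (Fin 8 → ℝ)) :
    E i * (E j * x) = -(E j * (E i * x)) := by
  rw [← mul_assoc, Eswap i j h, neg_mul, mul_assoc]

noncomputable def A3 : (Fin 8 → ℝ) [⋀^Fin 3]→ₗ[ℝ] ℝ :=
  (Matrix.detRowAlternating (R := ℝ) (n := Fin 3)).compLinearMap
    (LinearMap.funLeft ℝ ℝ ![0, 2, 5])

noncomputable def myf : ∀ i : ℕ, (Fin 8 → ℝ) [⋀^Fin i]→ₗ[ℝ] ℝ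
  | 3 => A3
  | _ => 0

noncomputable def φ : ExteriorAlgebra ℝ (Fin 8 → ℝ) →ₗ[ℝ] ℝ :=
  ExteriorAlgebra.liftAlternating myf

open ExteriorAlgebra in
lemma phi_mono (a b c : Fin 8) :
    φ (E a * (E b * E c)) = A3 ![Pi.single a 1, Pi.single b 1, Pi.single c 1] := by
  show φ (ι ℝ (Pi.single a 1) * (ι ℝ (Pi.single b 1) * ι ℝ (Pi.single c 1))) = _
  unfold φ
  rw [liftAlternating_ι_mul, liftAlternating_ι_mul, liftAlternating_ι]
  rfl

lemma A3_eval (a b c : Fin 8) :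
    A3 ![Pi.single a 1, Pi.single b 1, Pi.single c 1] =
      Matrix.det (Matrix.of fun i j =>
        (![Pi.single a 1, Pi.single b 1, Pi.single c 1] i : Fin 8 → ℝ) (![0,2,5] j)) := rfl

lemma phi_val (a b c : Fin 8) :
    φ (E a * (E b * E c)) =
      Matrix.det (Matrix.of fun i j =>
        (![Pi.single a 1, Pi.single b 1, Pi.single c 1] i : Fin 8 → ℝ) (![(0:Fin 8),2,5] j)) := by
  rw [phi_mono, A3_eval]

set_option maxHeartbeats 4000000 in
/-- On the 8-dimensional nilpotent Lie algebra with `de¹ = ⋯ = de⁴ = 0`,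
`de⁵ = −e¹∧e³ + e²∧e⁴`, `de⁶ = −e¹∧e⁴ − e²∧e³`, `de⁷ = −2(e¹∧e⁵ − e²∧e⁶)`,
`de⁸ = −2(e¹∧e⁶ + e²∧e⁵)`, the 2-form
`F = e¹∧e² + e³∧e⁴ + e⁵∧e⁶ + e⁷∧e⁸` satisfies `dF∧F∧F = 0`, i.e.
`d(F³) = 0` (the metric is balanced), while `dF ≠ 0`. -/
theorem nilpotent8_balanced
    (d : ExteriorAlgebra ℝ (Fin 8 → ℝ) →ₗ[ℝ] ExteriorAlgebra ℝ (Fin 8 → ℝ))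
    (hd1 : d 1 = 0)
    (hLeib : ∀ (v : Fin 8 → ℝ) (x : ExteriorAlgebra ℝ (Fin 8 → ℝ)),
      d (ExteriorAlgebra.ι ℝ v * x)
        = d (ExteriorAlgebra.ι ℝ v) * x - ExteriorAlgebra.ι ℝ v * d x)
    (h1 : d (E 0) = 0) (h2 : d (E 1) = 0) (h3 : d (E 2) = 0) (h4 : d (E 3) = 0)
    (h5 : d (E 4) = -(E 0 * E 2) + E 1 * E 3)
    (h6 : d (E 5) = -(E 0 * E 3) - E 1 * E 2)
    (h7 : d (E 6) = -((2 : ℝ) • (E 0 * E 4 - E 1 * E 5)))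
    (h8 : d (E 7) = -((2 : ℝ) • (E 0 * E 5 + E 1 * E 4))) :
    d (E 0 * E 1 + E 2 * E 3 + E 4 * E 5 + E 6 * E 7) *
      ((E 0 * E 1 + E 2 * E 3 + E 4 * E 5 + E 6 * E 7) *
       (E 0 * E 1 + E 2 * E 3 + E 4 * E 5 + E 6 * E 7)) = 0 ∧
    d ((E 0 * E 1 + E 2 * E 3 + E 4 * E 5 + E 6 * E 7) *
       (E 0 * E 1 + E 2 * E 3 + E 4 * E 5 + E 6 * E 7) *
       (E 0 * E 1 + E 2 * E 3 + E 4 * E 5 + E 6 * E 7)) = 0 ∧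
    d (E 0 * E 1 + E 2 * E 3 + E 4 * E 5 + E 6 * E 7) ≠ 0 := by
  have hLE : ∀ (i : Fin 8) (x : ExteriorAlgebra ℝ (Fin 8 → ℝ)),
      d (E i * x) = d (E i) * x - E i * d x := fun i x => hLeib _ x
  set F : ExteriorAlgebra ℝ (Fin 8 → ℝ) :=
    E 0 * E 1 + E 2 * E 3 + E 4 * E 5 + E 6 * E 7 with hF
  have e01 : d (E 0 * E 1) = 0 := by rw [hLE, h1, h2, zero_mul, mul_zero, sub_zero]
  have e23 : d (E 2 * E 3) = 0 := by rw [hLE, h3, h4, zero_mul, mul_zero, sub_zero]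
  have e45 : d (E 4 * E 5) =
      (-(E 0 * E 2) + E 1 * E 3) * E 5 - E 4 * (-(E 0 * E 3) - E 1 * E 2) := by
    rw [hLE, h5, h6]
  have e67 : d (E 6 * E 7) =
      (-((2 : ℝ) • (E 0 * E 4 - E 1 * E 5))) * E 7
        - E 6 * (-((2 : ℝ) • (E 0 * E 5 + E 1 * E 4))) := by
    rw [hLE, h7, h8]
  have hdF : d F =
      (-(E 0 * E 2) + E 1 * E 3) * E 5 - E 4 * (-(E 0 * E 3) - E 1 * E 2)
        + ((-((2 : ℝ) • (E 0 * E 4 - E 1 * E 5))) * E 7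
            - E 6 * (-((2 : ℝ) • (E 0 * E 5 + E 1 * E 4)))) := by
    rw [hF, map_add, map_add, map_add, e01, e23, e45, e67, zero_add, zero_add]
  -- part 1
  have G1 : d F * (F * F) = 0 := by
    rw [hdF, hF]
    simp (config := { decide := true }) only [two_smul, sub_eq_add_neg, neg_add, neg_neg,
      mul_add, add_mul, mul_neg, neg_mul, mul_assoc, Esq, Esq', Eswap, Eswap',
      mul_zero, zero_mul, neg_zero, add_zero, zero_add]
  have J1 : F * (d F * F) = 0 := by
    rw [hdF, hF]
    simp (config := { decide := true }) only [two_smul, sub_eq_add_neg, neg_add, neg_neg,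
      mul_add, add_mul, mul_neg, neg_mul, mul_assoc, Esq, Esq', Eswap, Eswap',
      mul_zero, zero_mul, neg_zero, add_zero, zero_add]
  have J2 : F * (F * d F) = 0 := by
    rw [hdF, hF]
    simp (config := { decide := true }) only [two_smul, sub_eq_add_neg, neg_add, neg_neg,
      mul_add, add_mul, mul_neg, neg_mul, mul_assoc, Esq, Esq', Eswap, Eswap',
      mul_zero, zero_mul, neg_zero, add_zero, zero_add]
  -- Leibniz for products of two generators
  have hL2 : ∀ (i j : Fin 8) (x : ExteriorAlgebra ℝ (Fin 8 → ℝ)),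
      d (E i * E j * x) = d (E i * E j) * x + E i * E j * d x := by
    intro i j x
    rw [mul_assoc, hLE i (E j * x), hLE j x, hLE i (E j)]
    noncomm_ring
  have hFmul : ∀ x : ExteriorAlgebra ℝ (Fin 8 → ℝ), d (F * x) = d F * x + F * d x := by
    intro x
    rw [hF]
    simp only [add_mul, map_add, hL2]
    abel
  have G2 : d (F * F * F) = 0 := by
    rw [mul_assoc F F F, hFmul, hFmul, mul_add F (d F * F) (F * d F), J1, J2, add_zero, G1, zero_add]
  refine ⟨G1, G2, ?_⟩
  intro h0
  have hv : φ (d F) = -1 := by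
    rw [hdF]
    simp only [smul_sub, smul_add, sub_mul, add_mul, neg_mul, mul_sub, mul_add, mul_neg,
      smul_mul_assoc, mul_smul_comm, mul_assoc, map_add, map_sub, map_neg, map_smul, phi_val]
    simp (config := { decide := true }) [phi_val, Matrix.det_fin_three, Pi.single_apply]
  rw [h0, map_zero] at hv
  norm_num at hv
end

section
/- On the 8-dimensional 3-step solvable Lie algebra with de¹ = de² = 0, de³ = e¹∧e³ − e²∧e⁴, de⁴ = e¹∧e⁴ + e²∧e³, de⁵ = −e¹∧e⁵ + e²∧e⁶, de⁶ = −e¹∧e⁶ − e²∧e⁵, de⁷ = −e³∧e⁵ + e⁴∧e⁶, de⁸ = −e³∧e⁶ − e⁴∧e⁵, the form F = Σⱼ₌₁⁴ e^{2j−1}∧e^{2j} satisfies dF = 2(e¹∧e³∧e⁴ − e¹∧e⁵∧e⁶) − e³∧e⁵∧e⁸ + e⁴∧e⁶∧e⁸ + e³∧e⁶∧e⁷ + e⁴∧e⁵∧e⁷ and d(F³) = 0. -/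
set_option maxHeartbeats 4000000 in
/-- On the 8-dimensional 3-step solvable Lie algebra with `de¹ = de² = 0`,
`de³ = e¹∧e³ − e²∧e⁴`, `de⁴ = e¹∧e⁴ + e²∧e³`, `de⁵ = −e¹∧e⁵ + e²∧e⁶`,
`de⁶ = −e¹∧e⁶ − e²∧e⁵`, `de⁷ = −e³∧e⁵ + e⁴∧e⁶`, `de⁸ = −e³∧e⁶ − e⁴∧e⁵`,
the form `F = Σⱼ e^{2j−1}∧e^{2j}` satisfies
`dF = 2(e¹∧e³∧e⁴ − e¹∧e⁵∧e⁶) − e³∧e⁵∧e⁸ + e⁴∧e⁶∧e⁸ + e³∧e⁶∧e⁷ + e⁴∧e⁵∧e⁷`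
and `d(F³) = 0`. -/
theorem solvable8_3step_balanced
    (d : ExteriorAlgebra ℝ (Fin 8 → ℝ) →ₗ[ℝ] ExteriorAlgebra ℝ (Fin 8 → ℝ))
    (hd1 : d 1 = 0)
    (hLeib : ∀ (v : Fin 8 → ℝ) (x : ExteriorAlgebra ℝ (Fin 8 → ℝ)),
      d (ExteriorAlgebra.ι ℝ v * x)
        = d (ExteriorAlgebra.ι ℝ v) * x - ExteriorAlgebra.ι ℝ v * d x)
    (h1 : d (E 0) = 0) (h2 : d (E 1) = 0)
    (h3 : d (E 2) = E 0 * E 2 - E 1 * E 3)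
    (h4 : d (E 3) = E 0 * E 3 + E 1 * E 2)
    (h5 : d (E 4) = -(E 0 * E 4) + E 1 * E 5)
    (h6 : d (E 5) = -(E 0 * E 5) - E 1 * E 4)
    (h7 : d (E 6) = -(E 2 * E 4) + E 3 * E 5)
    (h8 : d (E 7) = -(E 2 * E 5) - E 3 * E 4) :
    d (E 0 * E 1 + E 2 * E 3 + E 4 * E 5 + E 6 * E 7)
      = (2 : ℝ) • (E 0 * E 2 * E 3 - E 0 * E 4 * E 5)
        - E 2 * E 4 * E 7 + E 3 * E 5 * E 7 + E 2 * E 5 * E 6 + E 3 * E 4 * E 6 ∧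
    d ((E 0 * E 1 + E 2 * E 3 + E 4 * E 5 + E 6 * E 7) *
       (E 0 * E 1 + E 2 * E 3 + E 4 * E 5 + E 6 * E 7) *
       (E 0 * E 1 + E 2 * E 3 + E 4 * E 5 + E 6 * E 7)) = 0 := by
  have hL : ∀ (i : Fin 8) (x), d (E i * x) = d (E i) * x - E i * d x := fun i x => by
    simpa only [E] using hLeib (Pi.single i 1) x
  have sq : ∀ i : Fin 8, E i * E i = 0 := fun i => ExteriorAlgebra.ι_sq_zero _
  have sq' : ∀ (i : Fin 8) x, E i * (E i * x) = 0 := fun i x => by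
    rw [← mul_assoc, sq, zero_mul]
  have sw : ∀ i j : Fin 8, j < i → E i * E j = -(E j * E i) := fun i j _ =>
    eq_neg_of_add_eq_zero_left (ExteriorAlgebra.ι_add_mul_swap _ _)
  have sw' : ∀ (i j : Fin 8) (x), j < i → E i * (E j * x) = -(E j * (E i * x)) :=
    fun i j x h => by rw [← mul_assoc, sw i j h, neg_mul, mul_assoc]
  set F := E 0 * E 1 + E 2 * E 3 + E 4 * E 5 + E 6 * E 7 with hF
  have L2 : ∀ (i j : Fin 8) (x), d (E i * E j * x) = d (E i * E j) * x + E i * E j * d x := by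
    intro i j x
    rw [mul_assoc, hL, hL, hL]
    noncomm_ring
  have LF : ∀ x, d (F * x) = d F * x + F * d x := by
    intro x
    rw [hF]
    simp only [add_mul, map_add, L2]
    abel
  have part1 : d F
      = (2 : ℝ) • (E 0 * E 2 * E 3 - E 0 * E 4 * E 5)
        - E 2 * E 4 * E 7 + E 3 * E 5 * E 7 + E 2 * E 5 * E 6 + E 3 * E 4 * E 6 := by
    rw [hF]
    simp only [map_add, hL, h1, h2, h3, h4, h5, h6, h7, h8, two_smul, smul_sub]
    simp (config := { decide := true }) [mul_add, add_mul, mul_sub, sub_mul, mul_neg, neg_mul,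
      mul_assoc, sq, sq', sw, sw', mul_zero, zero_mul, neg_neg, sub_zero, zero_sub, add_zero,
      zero_add, mul_one, one_mul]
    abel
  refine ⟨part1, ?_⟩
  rw [mul_assoc, LF, LF, part1, hF]
  simp only [two_smul, smul_sub]
  simp (config := { decide := true }) [mul_add, add_mul, mul_sub, sub_mul, mul_neg, neg_mul,
    mul_assoc, sq, sq', sw, sw', mul_zero, zero_mul, neg_neg, sub_zero, zero_sub, add_zero,
    zero_add, mul_one, one_mul]
end
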